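/- arXiv:math/0405139 — 3 statements merged into one kernel-verified Lean document; each statement's English description precedes it below -/
import Mathlib

section
/- Let E be a subgroup of S_n, let 2 ≤ m ≤ n, and let I be the cyclic subgroup generated by some fixed m-cycle in S_n. Then the cardinality of the set Y = {σ ∈ S_n : σ I σ⁻¹ ⊆ E} equals (number of m-cycles contained in E) · m · (n−m)!. -/
/-!
A permutation `σ` conjugates `⟨c⟩` into `E` iff `σ c σ⁻¹ ∈ E`. Since the `m`-cycles are exactly
the conjugates of `c`, the map `σ ↦ σ c σ⁻¹` sends these `σ` onto the `m`-cycles of `E`, and each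
fibre is a left coset of the centralizer of `c`, which has order `m · (n - m)!`.
-/

open Equiv Equiv.Perm Subgroup Finset Nat

section Conjugation

variable {G : Type*} [Group G]

noncomputable def conjFiberEquivCentralizer {g τ : G} (h : IsConj g τ) :
    {σ : G // σ * g * σ⁻¹ = τ} ≃ centralizer {g} :=
  let σ₀ := (isConj_iff.mp h).choose
  have hσ₀ : σ₀ * g * σ₀⁻¹ = τ := (isConj_iff.mp h).choose_spec
  { toFun σ := ⟨σ₀⁻¹ * σ, by
      rw [mem_centralizer_singleton_iff]
      calc σ₀⁻¹ * σ * g = σ₀⁻¹ * (σ.1 * g * σ.1⁻¹) * σ := by group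
        _ = σ₀⁻¹ * (σ₀ * g * σ₀⁻¹) * σ := by rw [σ.2, hσ₀]
        _ = g * (σ₀⁻¹ * σ) := by group⟩
    invFun z := ⟨σ₀ * z, by
      rw [← hσ₀, mul_inv_rev, ← mul_assoc, mul_assoc σ₀, mem_centralizer_singleton_iff.mp z.2]
      group⟩
    left_inv σ := by simp
    right_inv z := by simp }

theorem nat_card_conj_mem (g : G) (S : Set G) :
    Nat.card {σ : G // σ * g * σ⁻¹ ∈ S} =
      Nat.card {τ : G // τ ∈ S ∧ IsConj g τ} * Nat.card (centralizer {g}) := by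
  have hS (σ : G) : σ * g * σ⁻¹ ∈ S ↔ σ * g * σ⁻¹ ∈ S ∧ IsConj g (σ * g * σ⁻¹) :=
    (and_iff_left (isConj_iff.mpr ⟨σ, rfl⟩)).symm
  rw [← Nat.card_prod, ← Nat.card_congr
    (sigmaSubtypeFiberEquivSubtype (fun σ => σ * g * σ⁻¹) (q := fun τ => τ ∈ S ∧ IsConj g τ) hS)]
  exact Nat.card_congr ((sigmaCongrRight fun τ => conjFiberEquivCentralizer τ.2.2).trans
    (sigmaEquivProd _ _))

theorem forall_mem_zpowers_conj_mem_iff (E : Subgroup G) (c σ : G) :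
    (∀ x ∈ zpowers c, σ * x * σ⁻¹ ∈ E) ↔ σ * c * σ⁻¹ ∈ E := by
  refine ⟨fun h => h c (mem_zpowers c), ?_⟩
  rintro h _ ⟨k, rfl⟩
  simpa only [conj_zpow] using E.zpow_mem h k

end Conjugation

namespace Equiv.Perm.IsCycle

variable {α : Type*} [Fintype α] [DecidableEq α] {c : Perm α}

theorem nat_card_centralizer (hc : c.IsCycle) :
    Nat.card (centralizer {c}) = #c.support * (Fintype.card α - #c.support)! := by
  simp [Perm.nat_card_centralizer, hc.cycleType, mul_comm]

theorem isConj_iff_isCycle_and_card_support_eq {τ : Perm α} (hc : c.IsCycle) :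
    IsConj c τ ↔ τ.IsCycle ∧ #τ.support = #c.support := by
  refine ⟨fun h => ?_, fun h => hc.isConj h.1 h.2.symm⟩
  obtain ⟨σ, rfl⟩ := _root_.isConj_iff.mp h
  exact ⟨hc.conj, card_support_conj⟩

end Equiv.Perm.IsCycle

theorem stmt_2_general (n m : ℕ)
    (E : Subgroup (Equiv.Perm (Fin n)))
    (c : Equiv.Perm (Fin n)) (hc : c.IsCycle) (hcard : c.support.card = m) :
    Nat.card {σ : Equiv.Perm (Fin n) //
        ∀ x ∈ Subgroup.zpowers c, σ * x * σ⁻¹ ∈ E}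
      = Nat.card {τ : Equiv.Perm (Fin n) // τ ∈ E ∧ τ.IsCycle ∧ τ.support.card = m}
          * (m * (n - m).factorial) := by
  simp_rw [forall_mem_zpowers_conj_mem_iff]
  have hconj := nat_card_conj_mem c (E : Set (Perm (Fin n)))
  simp_rw [SetLike.mem_coe, hc.isConj_iff_isCycle_and_card_support_eq, hcard] at hconj
  rw [hconj, hc.nat_card_centralizer, Fintype.card_fin, hcard]

theorem stmt_2 (n m : ℕ) (hm : 2 ≤ m) (hmn : m ≤ n)
    (E : Subgroup (Equiv.Perm (Fin n)))
    (c : Equiv.Perm (Fin n)) (hc : c.IsCycle) (hcard : c.support.card = m) :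
    Nat.card {σ : Equiv.Perm (Fin n) //
        ∀ x ∈ Subgroup.zpowers c, σ * x * σ⁻¹ ∈ E}
      = Nat.card {τ : Equiv.Perm (Fin n) // τ ∈ E ∧ τ.IsCycle ∧ τ.support.card = m}
          * (m * (n - m).factorial) :=
  stmt_2_general n m E c hc hcard
end

section
/- For n ≥ 3, the affine plane curve over ℂ defined by L_n^{(t)}(x) = 0 has no singular points: there is no pair (x₀, t₀) ∈ ℂ² with L_n^{(t₀)}(x₀) = 0, (∂/∂x L_n^{(t)}(x))(x₀,t₀) = 0, and (∂/∂t L_n^{(t)}(x))(x₀,t₀) = 0 simultaneously. -/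
open MvPolynomial

/-- The generalized Laguerre polynomial `L_n^{(t)}(x)` as a polynomial in the
two variables `x = X 0` and `t = X 1`. -/
noncomputable def lagL (n : ℕ) : MvPolynomial (Fin 2) ℂ :=
  ∑ j ∈ Finset.range (n + 1),
    (-1) ^ j * (n.choose j : MvPolynomial (Fin 2) ℂ) *
      (∏ k ∈ Finset.Icc (j + 1) n, (X 1 + (k : MvPolynomial (Fin 2) ℂ))) * X 0 ^ j

open Polynomial Finset in

lemma aeval_pderiv (i : Fin 2) (v : Fin 2 → Polynomial ℂ)
    (hvi : v i = Polynomial.X) (hvj : ∀ j, j ≠ i → Polynomial.derivative (v j) = 0)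
    (g : MvPolynomial (Fin 2) ℂ) :
    MvPolynomial.aeval v (pderiv i g) = Polynomial.derivative (MvPolynomial.aeval v g) := by
  induction g using MvPolynomial.induction_on with
  | C a => simp
  | add p q hp hq => simp [hp, hq]
  | mul_X p j hp =>
      rw [pderiv_mul, map_add, map_mul, map_mul, hp, map_mul, Polynomial.derivative_mul]
      by_cases h : j = i
      · subst h; simp [hvi]
      · rw [pderiv_X_of_ne h]; simp [hvj j h]

lemma eval_aeval (x₀ t₀ : ℂ) (v : Fin 2 → Polynomial ℂ) (s : ℂ)
    (h0 : Polynomial.eval s (v 0) = x₀) (h1 : Polynomial.eval s (v 1) = t₀)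
    (g : MvPolynomial (Fin 2) ℂ) :
    Polynomial.eval s (MvPolynomial.aeval v g) = eval ![x₀, t₀] g := by
  induction g using MvPolynomial.induction_on with
  | C a => simp
  | add p q hp hq => simp [hp, hq]
  | mul_X p j hp =>
      rw [map_mul, Polynomial.eval_mul, hp, MvPolynomial.eval_mul, MvPolynomial.aeval_X]
      congr 1
      fin_cases j <;> simp [h0, h1]

open Polynomial Finset in

noncomputable def lagA (n : ℕ) (t₀ : ℂ) (j : ℕ) : ℂ :=
  (-1)^j * (n.choose j : ℂ) * ∏ k ∈ Finset.Icc (j+1) n, (t₀ + (k:ℂ))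
open Polynomial Finset in
noncomputable def lagP (n : ℕ) (t₀ : ℂ) : Polynomial ℂ :=
  ∑ j ∈ Finset.range (n+1), Polynomial.C (lagA n t₀ j) * Polynomial.X ^ j
open Polynomial Finset in
lemma lagA_eq_zero {n j : ℕ} (h : n < j) (t₀ : ℂ) : lagA n t₀ j = 0 := by
  simp [lagA, Nat.choose_eq_zero_of_lt h]
open Polynomial Finset in
lemma coeff_lagP (n : ℕ) (t₀ : ℂ) (m : ℕ) : (lagP n t₀).coeff m = lagA n t₀ m := by
  unfold lagP
  rw [Polynomial.finset_sum_coeff]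
  simp only [Polynomial.coeff_C_mul, Polynomial.coeff_X_pow, mul_ite, mul_one, mul_zero]
  rw [Finset.sum_ite_eq (Finset.range (n+1)) m]
  by_cases h : m ∈ Finset.range (n+1)
  · simp [h]
  · simp only [h, if_false]
    exact (lagA_eq_zero (by simpa using h) t₀).symm
open Polynomial Finset in
lemma lagA_rec (n : ℕ) (t₀ : ℂ) (j : ℕ) :
    ((j:ℂ)+1) * (t₀ + (j:ℂ) + 1) * lagA n t₀ (j+1) = -(((n:ℂ)) - (j:ℂ)) * lagA n t₀ j := by
  rcases lt_or_ge j n with h | h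
  · unfold lagA
    have hmem : j + 1 ∈ Finset.Icc (j+1) n := by simp [Nat.succ_le_of_lt h]
    rw [← Finset.mul_prod_erase _ _ hmem]
    have herase : (Finset.Icc (j+1) n).erase (j+1) = Finset.Icc (j+1+1) n := by
      rw [Finset.Icc_erase_left]
      exact (Finset.Icc_add_one_left_eq_Ioc _ _).symm
    rw [herase]
    have hch : ((n.choose (j+1) : ℂ)) * ((j:ℂ)+1) = (n.choose j : ℂ) * (((n:ℂ)) - (j:ℂ)) := by
      have hcast := congrArg (Nat.cast : ℕ → ℂ) (Nat.choose_succ_right_eq n j)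
      push_cast [Nat.cast_sub h.le] at hcast
      linear_combination hcast
    push_cast
    linear_combination (-(-1:ℂ)^j) * (t₀ + (j:ℂ) + 1) *
      (∏ k ∈ Finset.Icc (j+1+1) n, (t₀ + (k:ℂ))) * hch
  · rw [lagA_eq_zero (by omega) t₀]
    rcases eq_or_lt_of_le h with h' | h'
    · rw [← h']
      ring
    · rw [lagA_eq_zero h' t₀]
      ring
open Polynomial Finset in
lemma lagP_ODE (n : ℕ) (t₀ : ℂ) :
    Polynomial.X * (derivative (derivative (lagP n t₀)))
      + (Polynomial.C (t₀+1) - Polynomial.X) * derivative (lagP n t₀)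
      + Polynomial.C ((n:ℂ)) * (lagP n t₀) = 0 := by
  ext m
  simp only [Polynomial.coeff_add, Polynomial.coeff_zero, sub_mul, Polynomial.coeff_sub,
    Polynomial.coeff_C_mul, Polynomial.coeff_derivative, coeff_lagP]
  cases m with
  | zero =>
      simp only [Polynomial.mul_coeff_zero, Polynomial.coeff_X_zero, zero_mul,
        Polynomial.coeff_derivative, coeff_lagP]
      push_cast
      linear_combination lagA_rec n t₀ 0
  | succ m =>
      rw [Polynomial.coeff_X_mul, Polynomial.coeff_X_mul]
      simp only [Polynomial.coeff_derivative, coeff_lagP]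
      have hrec := lagA_rec n t₀ (m+1)
      push_cast at hrec ⊢
      linear_combination hrec
open Polynomial Finset in
lemma lagP_ODE_iter (n : ℕ) (t₀ : ℂ) (i : ℕ) :
    Polynomial.X * (derivative^[i+2] (lagP n t₀))
      + (Polynomial.C (t₀+1+(i:ℂ)) - Polynomial.X) * derivative^[i+1] (lagP n t₀)
      + Polynomial.C ((n:ℂ) - (i:ℂ)) * derivative^[i] (lagP n t₀) = 0 := by
  induction i with
  | zero => simpa using lagP_ODE n t₀
  | succ i ih =>
      have h := congrArg derivative ih
      simp only [derivative_add, derivative_mul, derivative_X, derivative_C, derivative_sub,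
        derivative_zero, ← Function.iterate_succ_apply', zero_mul, zero_add, add_zero, one_mul,
        zero_sub, mul_one] at h
      push_cast
      simp only [Polynomial.C_add, Polynomial.C_sub, Polynomial.C_1]
      simp only [Polynomial.C_add, Polynomial.C_sub, Polynomial.C_1] at h
      linear_combination h
open Polynomial Finset in
lemma lagP_derivs_zero (n : ℕ) (t₀ x₀ : ℂ) (hx : x₀ ≠ 0)
    (h0 : (lagP n t₀).eval x₀ = 0) (h1 : (derivative (lagP n t₀)).eval x₀ = 0) :
    ∀ i, (derivative^[i] (lagP n t₀)).eval x₀ = 0 := by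
  have key : ∀ i, (derivative^[i] (lagP n t₀)).eval x₀ = 0 ∧
      (derivative^[i+1] (lagP n t₀)).eval x₀ = 0 := by
    intro i
    induction i with
    | zero => exact ⟨by simpa using h0, by simpa using h1⟩
    | succ i ih =>
        refine ⟨ih.2, ?_⟩
        have h := congrArg (Polynomial.eval x₀) (lagP_ODE_iter n t₀ i)
        simp only [Polynomial.eval_add, Polynomial.eval_mul, Polynomial.eval_sub,
          Polynomial.eval_C, Polynomial.eval_X, Polynomial.eval_zero, ih.1, ih.2,
          mul_zero, add_zero, zero_add] at h
        have : (derivative^[i+2] (lagP n t₀)).eval x₀ = 0 := by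
          rcases mul_eq_zero.mp h with h' | h'
          · exact absurd h' hx
          · exact h'
        simpa using this
  exact fun i => (key i).1
open Polynomial Finset in
lemma lagP_ne_zero (n : ℕ) (t₀ : ℂ) : lagP n t₀ ≠ 0 := by
  intro h
  have := coeff_lagP n t₀ n
  rw [h] at this
  simp only [Polynomial.coeff_zero] at this
  unfold lagA at this
  simp at this
  exact pow_ne_zero n (by norm_num : (-1:ℂ) ≠ 0) this.symm
open Polynomial Finset in
lemma lagP_zero_of (n : ℕ) (t₀ x₀ : ℂ) (hx : x₀ ≠ 0)
    (h0 : (lagP n t₀).eval x₀ = 0) (h1 : (derivative (lagP n t₀)).eval x₀ = 0) : False := by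
  apply lagP_ne_zero n t₀
  have hd := lagP_derivs_zero n t₀ x₀ hx h0 h1
  have htay : Polynomial.taylor x₀ (lagP n t₀) = 0 := by
    ext i
    rw [Polynomial.taylor_coeff, Polynomial.coeff_zero]
    have h2 : (Polynomial.hasseDeriv i (lagP n t₀)).eval x₀ * (i.factorial : ℂ) = 0 := by
      have h3 : (i.factorial • Polynomial.hasseDeriv i (lagP n t₀)) = derivative^[i] (lagP n t₀) := by
        rw [← Polynomial.factorial_smul_hasseDeriv]
        rfl
      have h4 := congrArg (Polynomial.eval x₀) h3
      rw [hd i] at h4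
      simpa [mul_comm] using h4
    rcases mul_eq_zero.mp h2 with h' | h'
    · exact h'
    · exact absurd h' (by exact_mod_cast Nat.factorial_ne_zero i)
  have : lagP n t₀ = Polynomial.taylor (-x₀) (Polynomial.taylor x₀ (lagP n t₀)) := by
    rw [Polynomial.taylor_taylor]
    simp
  rw [this, htay]
  simp
open Polynomial Finset in
lemma lagQ_deriv_ne (n j : ℕ) (hj : j ∈ Finset.Icc 1 n) :
    (derivative (∏ k ∈ Finset.Icc 1 n, (Polynomial.X + Polynomial.C (k:ℂ)))).eval (-(j:ℂ)) ≠ 0 := by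
  rw [← Finset.mul_prod_erase _ _ hj, derivative_mul]
  simp only [derivative_add, derivative_X, derivative_C, add_zero, one_mul,
    Polynomial.eval_add, Polynomial.eval_mul, Polynomial.eval_X, Polynomial.eval_C,
    Polynomial.eval_prod, neg_add_cancel, zero_mul]
  apply Finset.prod_ne_zero_iff.mpr
  intro k hk
  have : k ≠ j := (Finset.mem_erase.mp hk).1
  intro hzero
  apply this
  have : (k:ℂ) = (j:ℂ) := by linear_combination hzero
  exact_mod_cast this


open Polynomial Finset in
lemma Pform (n : ℕ) (t₀ : ℂ) :
    MvPolynomial.aeval ![Polynomial.X, Polynomial.C t₀] (lagL n)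
      = lagP n t₀ := by
  unfold lagP lagA lagL
  rw [map_sum]
  refine Finset.sum_congr rfl fun j hj => ?_
  simp only [map_mul, map_pow, map_prod, map_neg, map_one, map_natCast, map_add,
    MvPolynomial.aeval_X, Matrix.cons_val_one, Matrix.cons_val_zero, Matrix.head_cons,
    Polynomial.C_mul, Polynomial.C_pow, Polynomial.C_neg, Polynomial.C_1,
    Polynomial.C_add]
open Polynomial Finset in
lemma Qform (n : ℕ) :
    MvPolynomial.aeval ![Polynomial.C 0, Polynomial.X] (lagL n)
      = ∏ k ∈ Finset.Icc 1 n, (Polynomial.X + Polynomial.C (k:ℂ)) := by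
  unfold lagL
  rw [map_sum, Finset.sum_eq_single 0]
  · rw [map_mul, map_mul, map_mul, map_pow, map_prod]
    simp
  · intro j hj hj0
    rw [map_mul, map_pow]
    simp [hj0]
  · intro h
    simp at h


theorem stmt_9 (n : ℕ) (hn : 3 ≤ n) :
    ¬ ∃ x₀ t₀ : ℂ,
        eval ![x₀, t₀] (lagL n) = 0 ∧
        eval ![x₀, t₀] (pderiv 0 (lagL n)) = 0 ∧
        eval ![x₀, t₀] (pderiv 1 (lagL n)) = 0 := by
  rintro ⟨x₀, t₀, hf, hfx, hft⟩
  have hP := Pform n t₀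
  have hp_eval : (lagP n t₀).eval x₀ = 0 := by
    have h2 := eval_aeval x₀ t₀ ![Polynomial.X, Polynomial.C t₀] x₀ (by simp) (by simp) (lagL n)
    rw [hP] at h2
    rw [h2, hf]
  have hp_deriv : (Polynomial.derivative (lagP n t₀)).eval x₀ = 0 := by
    have h1 := aeval_pderiv 0 ![Polynomial.X, Polynomial.C t₀] (by simp)
      (by intro j hj; fin_cases j <;> simp_all) (lagL n)
    have h2 := eval_aeval x₀ t₀ ![Polynomial.X, Polynomial.C t₀] x₀ (by simp) (by simp)
      (pderiv 0 (lagL n))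
    rw [h1, hP] at h2
    rw [h2, hfx]
  by_cases hx : x₀ = 0
  · subst hx
    have h0 : lagA n t₀ 0 = 0 := by
      rw [← coeff_lagP, Polynomial.coeff_zero_eq_eval_zero]
      exact hp_eval
    have hprod : ∏ k ∈ Finset.Icc 1 n, (t₀ + (k:ℂ)) = 0 := by
      unfold lagA at h0
      simpa using h0
    obtain ⟨j, hj, hjz⟩ := Finset.prod_eq_zero_iff.mp hprod
    have ht : t₀ = -(j:ℂ) := by linear_combination hjz
    have h1 := aeval_pderiv 1 ![Polynomial.C 0, Polynomial.X] (by simp)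
      (by intro j hj; fin_cases j <;> simp_all) (lagL n)
    have h2 := eval_aeval 0 t₀ ![Polynomial.C 0, Polynomial.X] t₀ (by simp) (by simp)
      (pderiv 1 (lagL n))
    rw [h1, Qform n] at h2
    rw [hft] at h2
    rw [ht] at h2
    exact lagQ_deriv_ne n j hj h2
  · exact lagP_zero_of n t₀ x₀ hx hp_eval hp_deriv
end

section
/- Let n ≥ 5 and let G be a transitive subgroup of S_n whose order is divisible by a prime q with n/2 < q < n − 2. Then G contains the alternating group A_n. -/
/-
Let `σ ∈ G` have order `q`; as `q > n/2` it is a `q`-cycle, fixing a set `Δ` of `n - q ≥ 3`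
points. The pointwise stabiliser of `Δ` acts primitively on the `q` points it moves (a prime
number of them), which are more than half of all points; so the transitive group `G` is
primitive, and Jordan's multiple-primitivity criterion makes `G` `(n - q)`-transitive: the
setwise stabiliser of `Δ` induces every permutation of `Δ`. Since `q² ∤ n!`, `⟨σ⟩` is a Sylow
subgroup of the pointwise stabiliser of `Δ`, so by the Frattini argument the elements inducing
`(d e)` and `(d f)` on `Δ` may be chosen to normalise `⟨σ⟩`. Their commutator centralises `σ`,
hence acts on the support as a power of `σ`; dividing that power out leaves the 3-cycle
`⁅(d e), (d f)⁆`. A primitive group containing a 3-cycle contains `A_n` (Jordan).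
-/

open Equiv Equiv.Perm MulAction Subgroup Set SubMulAction
open scoped Finset commutatorElement

theorem Nat.Prime.not_sq_dvd_factorial {p n : ℕ} (hp : p.Prime) (hn : n < 2 * p) :
    ¬ p ^ 2 ∣ n.factorial := by
  have hlog : Nat.log p n < 2 := Nat.log_lt_of_lt_pow' two_ne_zero (by nlinarith [hp.two_le])
  rw [hp.pow_dvd_factorial_iff hlog]
  simpa using Nat.lt_succ_iff.mp ((Nat.div_lt_iff_lt_mul hp.pos).mpr (by omega))

theorem commute_commutatorElement_inv_of_conj_mem_zpowers {K : Type*} [Group K] {x g₁ g₂ : K}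
    (h₁ : g₁ * x * g₁⁻¹ ∈ zpowers x) (h₂ : g₂ * x * g₂⁻¹ ∈ zpowers x) :
    Commute ⁅g₁⁻¹, g₂⁻¹⁆ x := by
  have conj_mul : ∀ {a b : K} {i j : ℤ}, a * x * a⁻¹ = x ^ i → b * x * b⁻¹ = x ^ j →
      a * b * x * (a * b)⁻¹ = x ^ (i * j) := by
    intro a b i j ha hb
    rw [show a * b * x * (a * b)⁻¹ = a * (b * x * b⁻¹) * a⁻¹ by group, hb, ← conj_zpow, ha,
      ← zpow_mul]
  obtain ⟨i, hi⟩ := mem_zpowers_iff.mp h₁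
  obtain ⟨j, hj⟩ := mem_zpowers_iff.mp h₂
  have hconj : g₁ * g₂ * x * (g₁ * g₂)⁻¹ = g₂ * g₁ * x * (g₂ * g₁)⁻¹ := by
    rw [conj_mul hi.symm hj.symm, conj_mul hj.symm hi.symm, mul_comm]
  calc ⁅g₁⁻¹, g₂⁻¹⁆ * x = (g₂ * g₁)⁻¹ * (g₁ * g₂ * x * (g₁ * g₂)⁻¹) * (g₁ * g₂) := by
        rw [commutatorElement_def]; group
    _ = (g₂ * g₁)⁻¹ * (g₂ * g₁ * x * (g₂ * g₁)⁻¹) * (g₁ * g₂) := by rw [hconj]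
    _ = x * ⁅g₁⁻¹, g₂⁻¹⁆ := by rw [commutatorElement_def]; group

theorem Subgroup.commutatorElement_mem {K : Type*} [Group K] {H : Subgroup K} {a b : K}
    (ha : a ∈ H) (hb : b ∈ H) : ⁅a, b⁆ ∈ H :=
  mul_mem (mul_mem (mul_mem ha hb) (inv_mem ha)) (inv_mem hb)

theorem exists_conj_mem_zpowers_of_orderOf_eq {K : Type*} [Group K] [Finite K] {p : ℕ}
    [hp : Fact p.Prime] (hK : ¬ p ^ 2 ∣ Nat.card K) {x y : K} (hx : orderOf x = p)
    (hy : orderOf y = p) : ∃ h : K, h * y * h⁻¹ ∈ zpowers x := by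
  have hpgroup : ∀ z : K, orderOf z = p → IsPGroup p (zpowers z) := fun z hz =>
    IsPGroup.of_card (n := 1) (by rw [Nat.card_zpowers, hz, pow_one])
  obtain ⟨P, hxP⟩ := (hpgroup x hx).exists_le_sylow
  obtain ⟨Q, hyQ⟩ := (hpgroup y hy).exists_le_sylow
  have hP : (P : Subgroup K) = zpowers x := by
    refine (Subgroup.eq_of_le_of_card_ge hxP ?_).symm
    obtain ⟨m, hm⟩ := IsPGroup.iff_card.mp P.isPGroup'
    have hm1 : m ≤ 1 := by
      by_contra! hm2
      exact hK ((pow_dvd_pow p hm2).trans (hm ▸ P.1.card_subgroup_dvd_card))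
    rw [hm, Nat.card_zpowers, hx]
    exact (Nat.pow_le_pow_right hp.out.pos hm1).trans (pow_one p).le
  obtain ⟨h, rfl⟩ := MulAction.exists_smul_eq K Q P
  exact ⟨h, hP ▸ smul_mem_pointwise_smul y (MulAut.conj h) _ (hyQ (mem_zpowers y))⟩

namespace Equiv.Perm

variable {α : Type*}

theorem mapsTo_compl_of_mem_fixingSubgroup {t : Set α} {g : Perm α}
    (hg : g ∈ fixingSubgroup (Perm α) t) : MapsTo g tᶜ tᶜ := fun _ hx hgx =>
  hx (g.injective ((mem_fixingSubgroup_iff _).mp hg _ hgx) ▸ hgx)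

theorem eqOn_mul {f₁ f₂ g₁ g₂ : Perm α} {s : Set α} (h₁ : EqOn f₁ g₁ s) (h₂ : EqOn f₂ g₂ s)
    (hg₂ : MapsTo g₂ s s) : EqOn ⇑(f₁ * f₂) ⇑(g₁ * g₂) s := fun x hx => by
  simp only [Perm.mul_apply, h₂ hx, h₁ (hg₂ hx)]

theorem eqOn_inv {f g : Perm α} {s : Set α} (h : EqOn f g s) (hg : MapsTo ⇑g⁻¹ s s) :
    EqOn ⇑f⁻¹ ⇑g⁻¹ s := fun x hx => by
  rw [Perm.inv_eq_iff_eq, h (hg hx)]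
  simp

theorem eqOn_commutatorElement {t : Set α} {f₁ f₂ g₁ g₂ : Perm α}
    (hg₁ : g₁ ∈ fixingSubgroup (Perm α) t) (hg₂ : g₂ ∈ fixingSubgroup (Perm α) t)
    (h₁ : EqOn f₁ g₁ tᶜ) (h₂ : EqOn f₂ g₂ tᶜ) : EqOn ⇑⁅f₁, f₂⁆ ⇑⁅g₁, g₂⁆ tᶜ := by
  have hmaps := fun g (hg : g ∈ fixingSubgroup (Perm α) t) => mapsTo_compl_of_mem_fixingSubgroup hg
  rw [commutatorElement_def, commutatorElement_def]
  exact eqOn_mul (eqOn_mul (eqOn_mul h₁ h₂ (hmaps _ hg₂))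
    (eqOn_inv h₁ (hmaps _ (inv_mem hg₁))) (hmaps _ (inv_mem hg₁)))
    (eqOn_inv h₂ (hmaps _ (inv_mem hg₂))) (hmaps _ (inv_mem hg₂))

variable {G : Subgroup (Perm α)}

theorem exists_mem_eqOn_of_isMultiplyPretransitive {k : ℕ} [IsMultiplyPretransitive G α k]
    {s : Finset α} (hs : #s = k) (π : Perm α) : ∃ g ∈ G, EqOn g π s := by
  subst hs
  let x : Fin #s ↪ α := s.equivFin.symm.toEmbedding.trans (Function.Embedding.subtype _)
  obtain ⟨g, hg⟩ := exists_smul_eq G x (x.trans π.toEmbedding)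
  refine ⟨g, g.2, fun a ha => ?_⟩
  simpa [x, Subgroup.smul_def, Perm.smul_def] using DFunLike.congr_fun hg (s.equivFin ⟨a, ha⟩)

section Finite

variable [Fintype α] [DecidableEq α] {σ : Perm α}

theorem IsCycle.exists_zpow_eqOn_support_of_commute {c : Perm α} (hσ : σ.IsCycle)
    (hc : Commute c σ) :
    ∃ j : ℤ, EqOn c ⇑(σ ^ j) σ.support := by
  obtain ⟨_, hmem⟩ := hσ.commute_iff.mp hc
  obtain ⟨j, hj⟩ := mem_zpowers_iff.mp hmem
  exact ⟨j, fun x hx => by rw [hj, ofSubtype_apply_of_mem _ hx, subtypePerm_apply]⟩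

theorem isPreprimitive_ofFixingSubgroup_compl_support (hσG : σ ∈ G) (hσ : σ.IsCycle)
    (hq : (#σ.support).Prime) :
    IsPreprimitive (fixingSubgroup G (σ.support : Set α)ᶜ)
      (ofFixingSubgroup G (σ.support : Set α)ᶜ) := by
  have := isPretransitive_of_isCycle_mem hσ hσG
  apply IsPreprimitive.of_prime_card
  convert hq
  change Nat.card ((σ.support : Set α)ᶜᶜ : Set α) = _
  rw [compl_compl, Nat.card_coe_set_eq, ncard_coe_finset]

theorem isPreprimitive_of_isCycle_mem [IsPretransitive G α] (hσG : σ ∈ G) (hσ : σ.IsCycle)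
    (hq : (#σ.support).Prime) (hcard : Fintype.card α < 2 * #σ.support) :
    IsPreprimitive G α := by
  have := isPreprimitive_ofFixingSubgroup_compl_support hσG hσ hq
  apply IsPreprimitive.of_card_lt (f := ofFixingSubgroup_equivariantMap G (σ.support : Set α)ᶜ)
  have hrange : Set.range (ofFixingSubgroup_equivariantMap G (σ.support : Set α)ᶜ) =
      σ.support := by
    ext x
    constructor
    · rintro ⟨⟨y, hy⟩, rfl⟩
      change y ∈ (σ.support : Set α)
      simpa [mem_ofFixingSubgroup_iff] using hy
    · intro hx
      exact ⟨⟨x, by simpa [mem_ofFixingSubgroup_iff] using hx⟩, rfl⟩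
  rwa [hrange, Set.ncard_coe_finset, Nat.card_eq_fintype_card]

theorem isMultiplyPretransitive_of_isCycle_mem [IsPreprimitive G α] (hσG : σ ∈ G)
    (hσ : σ.IsCycle) (hq : (#σ.support).Prime) (hlt : #σ.support < Fintype.card α) :
    IsMultiplyPretransitive G α (Fintype.card α - #σ.support + 1) := by
  have hm : ((σ.support : Set α)ᶜ).ncard = Fintype.card α - #σ.support - 1 + 1 := by
    rw [Set.ncard_compl, Set.ncard_coe_finset, Nat.card_eq_fintype_card]
    omega
  have := (IsPreprimitive.isMultiplyPreprimitive (G := G) inferInstance hm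
    (by rw [Nat.card_eq_fintype_card]; have := hq.two_le; omega)
    (isPreprimitive_ofFixingSubgroup_compl_support hσG hσ hq)).isMultiplyPretransitive
  rwa [show Fintype.card α - #σ.support + 1 = Fintype.card α - #σ.support - 1 + 2 by omega]

theorem exists_eqOn_conj_mem_zpowers (hσG : σ ∈ G) (hσ : σ.IsCycle) (hq : (#σ.support).Prime)
    (hcard : Fintype.card α < 2 * #σ.support) {g : Perm α} (hgG : g ∈ G)
    (hg : MapsTo g (σ.support : Set α)ᶜ (σ.support : Set α)ᶜ) :
    ∃ g' ∈ G, EqOn g' g (σ.support : Set α)ᶜ ∧ g' * σ * g'⁻¹ ∈ zpowers σ := by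
  have := Fact.mk hq
  -- Frattini argument: `⟨σ⟩` is a Sylow subgroup of the pointwise stabiliser `K` of the
  -- fixed points of `σ`, and `g` normalises `K`.
  let K := G ⊓ fixingSubgroup (Perm α) (σ.support : Set α)ᶜ
  have hσK : σ ∈ K := ⟨hσG, (mem_fixingSubgroup_iff _).mpr fun y hy => notMem_support.mp hy⟩
  have hgσK : g * σ * g⁻¹ ∈ K := by
    refine ⟨G.mul_mem (G.mul_mem hgG hσG) (G.inv_mem hgG),
      (mem_fixingSubgroup_iff _).mpr fun y hy => ?_⟩
    obtain ⟨x, hx, rfl⟩ :=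
      (((toFinite _).injOn_iff_bijOn_of_mapsTo hg).mp g.injective.injOn).surjOn hy
    simp [Perm.smul_def, notMem_support.mp hx]
  have hK : ¬ #σ.support ^ 2 ∣ Nat.card K := fun h => hq.not_sq_dvd_factorial hcard <|
    h.trans <| (card_subgroup_dvd_card K).trans <| by
      rw [Nat.card_perm, Nat.card_eq_fintype_card]
  obtain ⟨h, hh⟩ := exists_conj_mem_zpowers_of_orderOf_eq hK (x := ⟨σ, hσK⟩)
    (y := ⟨g * σ * g⁻¹, hgσK⟩) (by rw [orderOf_mk, hσ.orderOf])
    (by rw [orderOf_mk, ← MulAut.conj_apply, MulEquiv.orderOf_eq, hσ.orderOf])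
  refine ⟨h * g, G.mul_mem h.2.1 hgG, fun x hx => ?_, ?_⟩
  · exact (mem_fixingSubgroup_iff _).mp h.2.2 (g x) (hg hx)
  · obtain ⟨k, hk⟩ := mem_zpowers_iff.mp hh
    refine mem_zpowers_iff.mpr ⟨k, ?_⟩
    have hk' := congrArg Subtype.val hk
    push_cast at hk'
    rw [hk']
    group

theorem exists_eqOn_conj_mem_zpowers_of_mem_fixingSubgroup
    [IsMultiplyPretransitive G α (Fintype.card α - #σ.support)] (hσG : σ ∈ G) (hσ : σ.IsCycle)
    (hq : (#σ.support).Prime) (hcard : Fintype.card α < 2 * #σ.support) {π : Perm α}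
    (hπ : π ∈ fixingSubgroup (Perm α) (σ.support : Set α)) :
    ∃ g ∈ G, EqOn g π (σ.support : Set α)ᶜ ∧ g * σ * g⁻¹ ∈ zpowers σ := by
  obtain ⟨g, hgG, hgπ⟩ :=
    exists_mem_eqOn_of_isMultiplyPretransitive (G := G) (s := σ.supportᶜ) (Finset.card_compl _) π
  rw [Finset.coe_compl] at hgπ
  have hmaps := mapsTo_compl_of_mem_fixingSubgroup hπ
  obtain ⟨g', hg'G, hg'g, hg'σ⟩ := exists_eqOn_conj_mem_zpowers hσG hσ hq hcard hgG
    (fun x hx => hgπ hx ▸ hmaps hx)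
  exact ⟨g', hg'G, hg'g.trans hgπ, hg'σ⟩

theorem exists_isThreeCycle_mem [IsMultiplyPretransitive G α (Fintype.card α - #σ.support)]
    (hσG : σ ∈ G) (hσ : σ.IsCycle) (hq : (#σ.support).Prime)
    (hcard : Fintype.card α < 2 * #σ.support) {d e f : α} (hd : d ∉ σ.support)
    (he : e ∉ σ.support) (hf : f ∉ σ.support) (hde : d ≠ e) (hdf : d ≠ f) (hef : e ≠ f) :
    ∃ t ∈ G, t.IsThreeCycle := by
  have hswap : ∀ {a b : α}, a ∉ σ.support → b ∉ σ.support →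
      swap a b ∈ fixingSubgroup (Perm α) (σ.support : Set α) := fun ha hb =>
    (mem_fixingSubgroup_iff _).mpr fun x hx =>
      swap_apply_of_ne_of_ne (fun h => ha (h ▸ hx)) (fun h => hb (h ▸ hx))
  obtain ⟨g₁, hg₁G, hg₁, hg₁σ⟩ :=
    exists_eqOn_conj_mem_zpowers_of_mem_fixingSubgroup hσG hσ hq hcard (hswap hd he)
  obtain ⟨g₂, hg₂G, hg₂, hg₂σ⟩ :=
    exists_eqOn_conj_mem_zpowers_of_mem_fixingSubgroup hσG hσ hq hcard (hswap hd hf)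
  obtain ⟨j, hj⟩ := hσ.exists_zpow_eqOn_support_of_commute
    (commute_commutatorElement_inv_of_conj_mem_zpowers hg₁σ hg₂σ)
  have hτ := eqOn_commutatorElement (hswap hd he) (hswap hd hf)
    (swap_inv d e ▸ eqOn_inv hg₁ (mapsTo_compl_of_mem_fixingSubgroup (inv_mem (hswap hd he))))
    (swap_inv d f ▸ eqOn_inv hg₂ (mapsTo_compl_of_mem_fixingSubgroup (inv_mem (hswap hd hf))))
  have hτfix := commutatorElement_mem (hswap hd he) (hswap hd hf)
  refine ⟨(σ ^ j)⁻¹ * ⁅g₁⁻¹, g₂⁻¹⁆, mul_mem (inv_mem (zpow_mem hσG j))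
    (commutatorElement_mem (inv_mem hg₁G) (inv_mem hg₂G)), ?_⟩
  suffices h : (σ ^ j)⁻¹ * ⁅g₁⁻¹, g₂⁻¹⁆ = ⁅swap d e, swap d f⁆ by
    rw [h, commutatorElement_def, swap_inv, swap_inv, mul_assoc _ (swap d e)]
    exact IsThreeCycle.isThreeCycle_sq (isThreeCycle_swap_mul_swap_same hde hdf hef)
  ext x
  by_cases hx : x ∈ σ.support
  · have hτx : ⁅swap d e, swap d f⁆ x = x := (mem_fixingSubgroup_iff _).mp hτfix x hx
    rw [Perm.mul_apply, hj hx, hτx, Perm.inv_eq_iff_eq]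
  · rw [Perm.mul_apply, hτ hx, Perm.inv_eq_iff_eq, zpow_apply_eq_self_of_apply_eq_self]
    exact notMem_support.mp (mapsTo_compl_of_mem_fixingSubgroup hτfix hx)

theorem alternatingGroup_le_of_isPretransitive_of_isCycle_mem [IsPretransitive G α]
    (hσG : σ ∈ G) (hσ : σ.IsCycle) (hq : (#σ.support).Prime)
    (hcard : Fintype.card α < 2 * #σ.support) (h3 : #σ.support + 3 ≤ Fintype.card α) :
    alternatingGroup α ≤ G := by
  have := isPreprimitive_of_isCycle_mem hσG hσ hq hcard
  have := isMultiplyPretransitive_of_isCycle_mem hσG hσ hq (by omega)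
  have : IsMultiplyPretransitive G α (Fintype.card α - #σ.support) :=
    isMultiplyPretransitive_of_le (n := Fintype.card α - #σ.support + 1) (by omega)
      (by rw [Nat.card_eq_fintype_card]; omega)
  obtain ⟨d, e, f, hd, he, hf, hde, hdf, hef⟩ :=
    Finset.two_lt_card_iff.mp (by rw [Finset.card_compl]; omega : 2 < #σ.supportᶜ)
  rw [Finset.mem_compl] at hd he hf
  obtain ⟨t, htG, ht⟩ := exists_isThreeCycle_mem hσG hσ hq hcard hd he hf hde hdf hef
  exact alternatingGroup_le_of_isPreprimitive_of_isThreeCycle_mem inferInstance ht htG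

end Finite

end Equiv.Perm

theorem stmt_10_general (n : ℕ) (G : Subgroup (Equiv.Perm (Fin n)))
    (htrans : ∀ a b : Fin n, ∃ σ ∈ G, σ a = b)
    (q : ℕ) (hq : q.Prime) (hq1 : n < 2 * q) (hq2 : q < n - 2)
    (hdvd : q ∣ Nat.card G) :
    alternatingGroup (Fin n) ≤ G := by
  have : IsPretransitive G (Fin n) :=
    ⟨fun a b => let ⟨σ, hσG, hσ⟩ := htrans a b; ⟨⟨σ, hσG⟩, hσ⟩⟩
  have := Fact.mk hq
  obtain ⟨σ, hσq⟩ := exists_prime_orderOf_dvd_card' q hdvd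
  rw [← orderOf_coe] at hσq
  have hσ : (σ : Perm (Fin n)).IsCycle :=
    isCycle_of_prime_order' (hσq ▸ hq) (by rwa [Fintype.card_fin, hσq])
  have hsupp : #(σ : Perm (Fin n)).support = q := hσ.orderOf ▸ hσq
  refine alternatingGroup_le_of_isPretransitive_of_isCycle_mem σ.2 hσ (hsupp ▸ hq) ?_ ?_ <;>
    rw [Fintype.card_fin, hsupp] <;> omega

theorem stmt_10 (n : ℕ) (hn : 5 ≤ n) (G : Subgroup (Equiv.Perm (Fin n)))
    (htrans : ∀ a b : Fin n, ∃ σ ∈ G, σ a = b)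
    (q : ℕ) (hq : q.Prime) (hq1 : n < 2 * q) (hq2 : q < n - 2)
    (hdvd : q ∣ Nat.card G) :
    alternatingGroup (Fin n) ≤ G :=
  stmt_10_general n G htrans q hq hq1 hq2 hdvd
end
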